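/- arXiv:2410.02960 — 4 statements merged into one kernel-verified Lean document; each statement's English description precedes it below -/
import Mathlib

section
/- Let Q be a finite-dimensional real vector space, H : [0,T] × Q × Q* → ℝ a C¹ Hamiltonian, and (q,p) : [0,T] → Q × Q* a C¹ curve with q(0) = q₀ and p(T) = p₁. Then the Type II action S_II[q,p] = ⟨p(T), q(T)⟩ − ∫₀ᵀ (⟨p(t), q̇(t)⟩ − H(t,q(t),p(t))) dt is stationary with respect to all C¹ variations (δq, δp) satisfying δq(0) = 0 and δp(T) = 0 if and only if q̇(t) = D_p H(t,q(t),p(t)) and ṗ(t) = −D_q H(t,q(t),p(t)) for all t ∈ (0,T). -/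
/-!
Differentiating under the integral sign and integrating `⟨p, δq̇⟩` by parts, the boundary term
`⟨p(T), δq(T)⟩` cancels, and `δq(0) = 0`, `δp(T) = 0` leave the first variation
`∫₀ᵀ (D_q H δq + ⟨δq, ṗ⟩ + D_p H δp − ⟨δp, q̇⟩) dt`.
Hamilton's equations make the integrand vanish on `(0,T)`. Conversely, testing with variations
`φ eᵢ` in a single coordinate, the fundamental lemma of the calculus of variations forces each
coordinate of `D_p H − q̇` and of `D_q H + ṗ` to vanish on `(0,T)`.
-/

open Set

/-- The Type II action
`S_II[q,p] = ⟨p(T), q(T)⟩ − ∫₀ᵀ (⟨p(t), q̇(t)⟩ − H(t,q(t),p(t))) dt`. -/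
noncomputable def typeIIAction (n : ℕ) (T : ℝ)
    (H : ℝ → (Fin n → ℝ) → (Fin n → ℝ) → ℝ) (q p : ℝ → (Fin n → ℝ)) : ℝ :=
  (∑ i, p T i * q T i)
    - ∫ t in (0 : ℝ)..T, ((∑ i, p t i * deriv q t i) - H t (q t) (p t))

open MeasureTheory

theorem LinearMap.apply_eq_dotProduct {R ι : Type*} [CommSemiring R] [Fintype ι] [DecidableEq ι]
    (L : (ι → R) →ₗ[R] R) (x : ι → R) : L x = x ⬝ᵥ fun i => L (Pi.single i 1) := by
  conv_lhs => rw [← Finset.univ_sum_single x]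
  simp only [map_sum, dotProduct]
  refine Finset.sum_congr rfl fun i _ => ?_
  rw [← smul_eq_mul, ← map_smul, ← Pi.single_smul', smul_eq_mul, mul_one]

theorem ContinuousLinearMap.apply_eq_dotProduct {ι : Type*} [Fintype ι] [DecidableEq ι]
    (L : (ι → ℝ) →L[ℝ] ℝ) (x : ι → ℝ) : L x = x ⬝ᵥ fun i => L (Pi.single i 1) :=
  LinearMap.apply_eq_dotProduct L.toLinearMap x

theorem HasDerivAt.dotProduct {ι : Type*} [Fintype ι] {u v : ℝ → ι → ℝ} {u' v' : ι → ℝ} {x : ℝ}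
    (hu : HasDerivAt u u' x) (hv : HasDerivAt v v' x) :
    HasDerivAt (fun x => u x ⬝ᵥ v x) (u' ⬝ᵥ v x + u x ⬝ᵥ v') x := by
  simp only [_root_.dotProduct, ← Finset.sum_add_distrib]
  exact .fun_sum fun i _ => (hasDerivAt_pi.1 hu i).mul (hasDerivAt_pi.1 hv i)

section PartialDerivatives

variable {E F G : Type*} [NormedAddCommGroup E] [NormedSpace ℝ E] [NormedAddCommGroup F]
  [NormedSpace ℝ F] [NormedAddCommGroup G] [NormedSpace ℝ G] {H : ℝ → E → F → G}

theorem fderiv_slice_mid_apply {t : ℝ} {x : E} {y : F} (hH : DifferentiableAt ℝ ↿H (t, x, y))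
    (w : E) : fderiv ℝ (fun x' => H t x' y) x w = fderiv ℝ ↿H (t, x, y) (0, w, 0) := by
  have h := hH.hasFDerivAt.comp x <|
    (hasFDerivAt_prodMk_right t (x, y)).comp x (hasFDerivAt_prodMk_left (𝕜 := ℝ) x y)
  rw [show fderiv ℝ (fun x' => H t x' y) x = _ from h.fderiv]
  simp

theorem fderiv_slice_right_apply {t : ℝ} {x : E} {y : F} (hH : DifferentiableAt ℝ ↿H (t, x, y))
    (w : F) : fderiv ℝ (fun y' => H t x y') y w = fderiv ℝ ↿H (t, x, y) (0, 0, w) := by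
  have h := hH.hasFDerivAt.comp y <|
    (hasFDerivAt_prodMk_right t (x, y)).comp y (hasFDerivAt_prodMk_right (𝕜 := ℝ) x y)
  rw [show fderiv ℝ (fun y' => H t x y') y = _ from h.fderiv]
  simp

theorem fderiv_apply_eq_fderiv_slice_add {t : ℝ} {x : E} {y : F}
    (hH : DifferentiableAt ℝ ↿H (t, x, y)) (u : E) (v : F) :
    fderiv ℝ ↿H (t, x, y) (0, u, v) =
      fderiv ℝ (fun x' => H t x' y) x u + fderiv ℝ (fun y' => H t x y') y v := by
  rw [fderiv_slice_mid_apply hH, fderiv_slice_right_apply hH, ← map_add, Prod.mk_add_mk,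
    Prod.mk_add_mk, add_zero, zero_add, add_zero]

theorem continuous_fderiv_slice_mid_apply (hH : ContDiff ℝ 1 ↿H) {x : ℝ → E} {y : ℝ → F}
    (hx : Continuous x) (hy : Continuous y) (w : E) :
    Continuous fun t => fderiv ℝ (fun x' => H t x' (y t)) (x t) w := by
  simp only [fderiv_slice_mid_apply (hH.differentiable one_ne_zero _)]
  have := hH.continuous_fderiv one_ne_zero
  fun_prop

theorem continuous_fderiv_slice_right_apply (hH : ContDiff ℝ 1 ↿H) {x : ℝ → E} {y : ℝ → F}
    (hx : Continuous x) (hy : Continuous y) (w : F) :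
    Continuous fun t => fderiv ℝ (fun y' => H t (x t) y') (y t) w := by
  simp only [fderiv_slice_right_apply (hH.differentiable one_ne_zero _)]
  have := hH.continuous_fderiv one_ne_zero
  fun_prop

end PartialDerivatives

theorem hasDerivAt_intervalIntegral_of_continuous {E : Type*} [NormedAddCommGroup E]
    [NormedSpace ℝ E] {F F' : ℝ → ℝ → E} (hF : Continuous (Function.uncurry F))
    (hF' : Continuous (Function.uncurry F'))
    (hderiv : ∀ x t, HasDerivAt (F · t) (F' x t) x) (a b x₀ : ℝ) :
    HasDerivAt (fun x => ∫ t in a..b, F x t) (∫ t in a..b, F' x₀ t) x₀ := by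
  obtain ⟨C, hC⟩ := ((isCompact_closedBall x₀ 1).prod isCompact_uIcc).exists_bound_of_continuousOn
    (hF'.continuousOn (s := Metric.closedBall x₀ 1 ×ˢ uIcc a b))
  have hsection (x : ℝ) : Continuous (F x) := hF.comp (Continuous.prodMk_right x)
  exact (intervalIntegral.hasDerivAt_integral_of_dominated_loc_of_deriv_le
    (bound := fun _ => C) (Metric.ball_mem_nhds x₀ one_pos)
    (.of_forall fun x => (hsection x).aestronglyMeasurable)
    ((hsection x₀).intervalIntegrable a b)
    (hF'.comp (Continuous.prodMk_right x₀)).aestronglyMeasurable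
    (.of_forall fun t ht x hx => hC (x, t) ⟨Metric.ball_subset_closedBall hx, uIoc_subset_uIcc ht⟩)
    intervalIntegrable_const (.of_forall fun t _ x _ => hderiv x t)).2

theorem eqOn_zero_of_forall_intervalIntegral_mul_eq_zero {g : ℝ → ℝ} (hg : Continuous g)
    {a b : ℝ} (h : ∀ φ : ℝ → ℝ, ContDiff ℝ 1 φ → φ a = 0 → φ b = 0 → ∫ t in a..b, φ t * g t = 0) :
    EqOn g 0 (Ioo a b) := by
  rcases le_or_gt b a with hba | hab
  · simp [Ioo_eq_empty_of_le hba]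
  have hae := isOpen_Ioo.ae_eq_zero_of_integral_contDiff_smul_eq_zero (μ := volume)
    (hg.locallyIntegrable.locallyIntegrableOn _) fun φ hφ _ hsupp => by
      have hvanish : ∀ x ∉ Ioo a b, φ x = 0 := fun x hx =>
        image_eq_zero_of_notMem_tsupport (hsupp.mt hx)
      rw [← setIntegral_eq_integral_of_forall_compl_eq_zero (s := Ioc a b)
        fun x hx => by rw [hvanish x (fun h => hx (Ioo_subset_Ioc_self h)), zero_smul],
        ← intervalIntegral.integral_of_le hab.le]
      exact h φ (hφ.of_le (by norm_cast)) (hvanish a fun h => h.1.ne rfl)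
        (hvanish b fun h => h.2.ne rfl)
  exact Measure.eqOn_open_of_ae_eq ((ae_restrict_iff' measurableSet_Ioo).2 hae) isOpen_Ioo
    hg.continuousOn continuousOn_const

def IsTypeIIStationary (n : ℕ) (T : ℝ) (H : ℝ → (Fin n → ℝ) → (Fin n → ℝ) → ℝ)
    (q p : ℝ → Fin n → ℝ) : Prop :=
  ∀ δq δp : ℝ → Fin n → ℝ, ContDiff ℝ 1 δq → ContDiff ℝ 1 δp → δq 0 = 0 → δp T = 0 →
    deriv (fun ε : ℝ =>
      typeIIAction n T H (fun t => q t + ε • δq t) (fun t => p t + ε • δp t)) 0 = 0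

section Variation

-- `↿H` is the uncurried Hamiltonian `fun x => H x.1 x.2.1 x.2.2` of the main theorem's hypothesis.
variable {n : ℕ} {T : ℝ} {H : ℝ → (Fin n → ℝ) → (Fin n → ℝ) → ℝ} {q p δq δp : ℝ → Fin n → ℝ}

theorem typeIIAction_add_smul (hq : Differentiable ℝ q) (hδq : Differentiable ℝ δq) (ε : ℝ) :
    typeIIAction n T H (fun t => q t + ε • δq t) (fun t => p t + ε • δp t) =
      (p T + ε • δp T) ⬝ᵥ (q T + ε • δq T) - ∫ t in (0 : ℝ)..T,
        ((p t + ε • δp t) ⬝ᵥ (deriv q t + ε • deriv δq t)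
          - H t (q t + ε • δq t) (p t + ε • δp t)) := by
  have hderiv (t : ℝ) : deriv (fun s => q s + ε • δq s) t = deriv q t + ε • deriv δq t :=
    ((hq t).hasDerivAt.add ((hδq t).hasDerivAt.const_smul ε)).deriv
  simp only [typeIIAction, hderiv]
  rfl

theorem hasDerivAt_typeIIAction_add_smul (hH : ContDiff ℝ 1 ↿H) (hq : ContDiff ℝ 1 q)
    (hp : ContDiff ℝ 1 p) (hδq : ContDiff ℝ 1 δq) (hδp : ContDiff ℝ 1 δp) :
    HasDerivAt (fun ε : ℝ => typeIIAction n T H (fun t => q t + ε • δq t) (fun t => p t + ε • δp t))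
      (δp T ⬝ᵥ q T + p T ⬝ᵥ δq T - ∫ t in (0 : ℝ)..T,
        (δp t ⬝ᵥ deriv q t + p t ⬝ᵥ deriv δq t - fderiv ℝ ↿H (t, q t, p t) (0, δq t, δp t))) 0 := by
  have := hH.continuous; have := hH.continuous_fderiv one_ne_zero
  have := hq.continuous; have := hp.continuous; have := hδq.continuous; have := hδp.continuous
  have := hq.continuous_deriv le_rfl; have := hδq.continuous_deriv le_rfl
  have hline (a v : Fin n → ℝ) (ε : ℝ) : HasDerivAt (fun ε : ℝ => a + ε • v) v ε := by
    simpa using ((hasDerivAt_id ε).smul_const v).const_add a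
  have hL (ε t : ℝ) : HasDerivAt (fun ε => (p t + ε • δp t) ⬝ᵥ (deriv q t + ε • deriv δq t)
      - H t (q t + ε • δq t) (p t + ε • δp t))
      (δp t ⬝ᵥ (deriv q t + ε • deriv δq t) + (p t + ε • δp t) ⬝ᵥ deriv δq t
        - fderiv ℝ ↿H (t, q t + ε • δq t, p t + ε • δp t) (0, δq t, δp t)) ε :=
    ((hline _ _ ε).dotProduct (hline _ _ ε)).sub <|
      (hH.differentiable one_ne_zero _).hasFDerivAt.comp_hasDerivAt ε <|
        (hasDerivAt_const ε t).prodMk ((hline _ _ ε).prodMk (hline _ _ ε))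
  have hintegral := hasDerivAt_intervalIntegral_of_continuous
    (by simp only [Function.uncurry_def]; fun_prop) (by simp only [Function.uncurry_def]; fun_prop)
    hL 0 T 0
  have hboundary := (hline (p T) (δp T) 0).dotProduct (hline (q T) (δq T) 0)
  simp only [typeIIAction_add_smul (hq.differentiable one_ne_zero) (hδq.differentiable one_ne_zero)]
  refine (hboundary.sub hintegral).congr_deriv ?_
  simp only [zero_smul, add_zero]

theorem hasDerivAt_typeIIAction_admissible_variation (hH : ContDiff ℝ 1 ↿H) (hq : ContDiff ℝ 1 q)
    (hp : ContDiff ℝ 1 p) (hδq : ContDiff ℝ 1 δq) (hδp : ContDiff ℝ 1 δp)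
    (hδq0 : δq 0 = 0) (hδpT : δp T = 0) :
    HasDerivAt (fun ε : ℝ => typeIIAction n T H (fun t => q t + ε • δq t) (fun t => p t + ε • δp t))
      (∫ t in (0 : ℝ)..T, (fderiv ℝ (fun q' => H t q' (p t)) (q t) (δq t) + δq t ⬝ᵥ deriv p t
          + (fderiv ℝ (fun p' => H t (q t) p') (p t) (δp t) - δp t ⬝ᵥ deriv q t))) 0 := by
  refine (hasDerivAt_typeIIAction_add_smul hH hq hp hδq hδp).congr_deriv ?_
  have := hH.continuous_fderiv one_ne_zero
  have := hq.continuous; have := hp.continuous; have := hδq.continuous; have := hδp.continuous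
  have := hq.continuous_deriv le_rfl; have := hp.continuous_deriv le_rfl
  have := hδq.continuous_deriv le_rfl
  have hpδq (t : ℝ) : HasDerivAt (fun t => p t ⬝ᵥ δq t) (deriv p t ⬝ᵥ δq t + p t ⬝ᵥ deriv δq t) t :=
    (hp.differentiable one_ne_zero t).hasDerivAt.dotProduct
      (hδq.differentiable one_ne_zero t).hasDerivAt
  have hintegrand (t : ℝ) : fderiv ℝ (fun q' => H t q' (p t)) (q t) (δq t) + δq t ⬝ᵥ deriv p t
      + (fderiv ℝ (fun p' => H t (q t) p') (p t) (δp t) - δp t ⬝ᵥ deriv q t)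
      = (deriv p t ⬝ᵥ δq t + p t ⬝ᵥ deriv δq t) - (δp t ⬝ᵥ deriv q t + p t ⬝ᵥ deriv δq t
        - fderiv ℝ ↿H (t, q t, p t) (0, δq t, δp t)) := by
    rw [fderiv_apply_eq_fderiv_slice_add (hH.differentiable one_ne_zero _), dotProduct_comm (δq t)]
    ring
  rw [intervalIntegral.integral_congr fun t _ => hintegrand t]
  symm
  rw [intervalIntegral.integral_sub
      ((by fun_prop : Continuous _).intervalIntegrable _ _)
      ((by fun_prop : Continuous _).intervalIntegrable _ _),
    intervalIntegral.integral_eq_sub_of_hasDerivAt (fun t _ => hpδq t)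
      ((by fun_prop : Continuous _).intervalIntegrable _ _), hδq0, hδpT]
  simp

theorem IsTypeIIStationary.deriv_position_eqOn (hstat : IsTypeIIStationary n T H q p)
    (hH : ContDiff ℝ 1 ↿H) (hq : ContDiff ℝ 1 q) (hp : ContDiff ℝ 1 p) (i : Fin n) :
    EqOn (fun t => deriv q t i) (fun t => fderiv ℝ (fun p' => H t (q t) p') (p t) (Pi.single i 1))
      (Ioo 0 T) := by
  refine fun t ht => (sub_eq_zero.1 (eqOn_zero_of_forall_intervalIntegral_mul_eq_zero
    (g := fun t => fderiv ℝ (fun p' => H t (q t) p') (p t) (Pi.single i 1) - deriv q t i)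
    ((continuous_fderiv_slice_right_apply hH hq.continuous hp.continuous _).sub
      ((continuous_apply i).comp (hq.continuous_deriv le_rfl))) (fun φ hφ _ hφT => ?_) ht)).symm
  have hδp : ContDiff ℝ 1 fun t => φ t • Pi.single (M := fun _ => ℝ) i 1 := hφ.smul contDiff_const
  have hδpT : φ T • Pi.single (M := fun _ => ℝ) i 1 = 0 := by simp [hφT]
  have := (hasDerivAt_typeIIAction_admissible_variation hH hq hp contDiff_const hδp rfl hδpT).deriv
  simpa [mul_sub] using this.symm.trans (hstat (fun _ => 0) _ contDiff_const hδp rfl hδpT)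

theorem IsTypeIIStationary.deriv_momentum_eqOn (hstat : IsTypeIIStationary n T H q p)
    (hH : ContDiff ℝ 1 ↿H) (hq : ContDiff ℝ 1 q) (hp : ContDiff ℝ 1 p) (i : Fin n) :
    EqOn (fun t => deriv p t i) (fun t => -fderiv ℝ (fun q' => H t q' (p t)) (q t) (Pi.single i 1))
      (Ioo 0 T) := by
  refine fun t ht => eq_neg_of_add_eq_zero_right (eqOn_zero_of_forall_intervalIntegral_mul_eq_zero
    (g := fun t => fderiv ℝ (fun q' => H t q' (p t)) (q t) (Pi.single i 1) + deriv p t i)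
    ((continuous_fderiv_slice_mid_apply hH hq.continuous hp.continuous _).add
      ((continuous_apply i).comp (hp.continuous_deriv le_rfl))) (fun φ hφ hφ0 _ => ?_) ht)
  have hδq : ContDiff ℝ 1 fun t => φ t • Pi.single (M := fun _ => ℝ) i 1 := hφ.smul contDiff_const
  have hδq0 : φ 0 • Pi.single (M := fun _ => ℝ) i 1 = 0 := by simp [hφ0]
  have := (hasDerivAt_typeIIAction_admissible_variation (T := T) hH hq hp hδq contDiff_const
    hδq0 rfl).deriv
  simpa [mul_add] using this.symm.trans (hstat _ (fun _ => 0) hδq contDiff_const hδq0 rfl)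

theorem isTypeIIStationary_of_hamilton (hT : 0 ≤ T) (hH : ContDiff ℝ 1 ↿H) (hq : ContDiff ℝ 1 q)
    (hp : ContDiff ℝ 1 p) (hham : ∀ t ∈ Ioo 0 T,
      deriv q t = (fun i => fderiv ℝ (fun p' => H t (q t) p') (p t) (Pi.single i 1)) ∧
      deriv p t = (fun i => -fderiv ℝ (fun q' => H t q' (p t)) (q t) (Pi.single i 1))) :
    IsTypeIIStationary n T H q p := by
  intro δq δp hδq hδp hδq0 hδpT
  rw [(hasDerivAt_typeIIAction_admissible_variation hH hq hp hδq hδp hδq0 hδpT).deriv,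
    intervalIntegral.integral_of_le hT, integral_Ioc_eq_integral_Ioo]
  refine setIntegral_eq_zero_of_forall_eq_zero fun t ht => ?_
  obtain ⟨hqdot, hpdot⟩ := hham t ht
  rw [ContinuousLinearMap.apply_eq_dotProduct, ContinuousLinearMap.apply_eq_dotProduct, hqdot,
    hpdot]
  simp [dotProduct]

end Variation

theorem typeII_variational_principle_general
    (n : ℕ) (T : ℝ) (hT : 0 < T)
    (H : ℝ → (Fin n → ℝ) → (Fin n → ℝ) → ℝ)
    (hH : ContDiff ℝ 1 (fun x : ℝ × (Fin n → ℝ) × (Fin n → ℝ) => H x.1 x.2.1 x.2.2))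
    (q p : ℝ → (Fin n → ℝ)) (hq : ContDiff ℝ 1 q) (hp : ContDiff ℝ 1 p) :
    (∀ δq δp : ℝ → (Fin n → ℝ), ContDiff ℝ 1 δq → ContDiff ℝ 1 δp →
        δq 0 = 0 → δp T = 0 →
        deriv (fun ε : ℝ =>
          typeIIAction n T H (fun t => q t + ε • δq t) (fun t => p t + ε • δp t)) 0 = 0)
    ↔ (∀ t ∈ Ioo (0 : ℝ) T,
        deriv q t = (fun i => fderiv ℝ (fun p' => H t (q t) p') (p t) (Pi.single i 1)) ∧
        deriv p t = (fun i => -fderiv ℝ (fun q' => H t q' (p t)) (q t) (Pi.single i 1))) :=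
  ⟨fun hstat _ ht =>
    ⟨funext fun i => IsTypeIIStationary.deriv_position_eqOn hstat hH hq hp i ht,
      funext fun i => IsTypeIIStationary.deriv_momentum_eqOn hstat hH hq hp i ht⟩,
    isTypeIIStationary_of_hamilton hT.le hH hq hp⟩

/-- Type II variational principle on a vector space, Leok–Zhang.
A C¹ curve `(q,p)` with `q(0) = q₀`, `p(T) = p₁` makes the Type II action stationary with
respect to all C¹ variations `(δq, δp)` with `δq(0) = 0`, `δp(T) = 0` if and only if
Hamilton's equations `q̇ = D_p H`, `ṗ = −D_q H` hold on `(0,T)`. -/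
theorem typeII_variational_principle
    (n : ℕ) (T : ℝ) (hT : 0 < T)
    (H : ℝ → (Fin n → ℝ) → (Fin n → ℝ) → ℝ)
    (hH : ContDiff ℝ 1 (fun x : ℝ × (Fin n → ℝ) × (Fin n → ℝ) => H x.1 x.2.1 x.2.2))
    (q p : ℝ → (Fin n → ℝ)) (hq : ContDiff ℝ 1 q) (hp : ContDiff ℝ 1 p)
    (q₀ p₁ : Fin n → ℝ) (hq0 : q 0 = q₀) (hpT : p T = p₁) :
    (∀ δq δp : ℝ → (Fin n → ℝ), ContDiff ℝ 1 δq → ContDiff ℝ 1 δp →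
        δq 0 = 0 → δp T = 0 →
        deriv (fun ε : ℝ =>
          typeIIAction n T H (fun t => q t + ε • δq t) (fun t => p t + ε • δp t)) 0 = 0)
    ↔ (∀ t ∈ Ioo (0 : ℝ) T,
        deriv q t = (fun i => fderiv ℝ (fun p' => H t (q t) p') (p t) (Pi.single i 1)) ∧
        deriv p t = (fun i => -fderiv ℝ (fun q' => H t q' (p t)) (q t) (Pi.single i 1))) :=
  typeII_variational_principle_general n T hT H hH q p hq hp
end

section
/- Let U ⊆ ℝⁿ be open and Φ : U → GL(n,ℝ) smooth. For u, v ∈ ℝⁿ let X_u, X_v be the vector fields on U defined by X_u(q) = Φ(q)u, X_v(q) = Φ(q)v. Then the Lie bracket of vector fields satisfies [X_u, X_v](q) = Φ(q)[u,v]_q, where [u,v]_q = Φ(q)⁻¹(DΦ(q)(Φ(q)u) v − DΦ(q)(Φ(q)v) u). In particular, [·,·]_q satisfies the Jacobi identity for each fixed q when computed pointwise through the vector-field bracket. -/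
/-- The Lie bracket of vector fields on `ℝⁿ`: `[X,Y](q) = DY(q)X(q) − DX(q)Y(q)`. -/
noncomputable def vecBracket (n : ℕ) (X Y : (Fin n → ℝ) → (Fin n → ℝ)) :
    (Fin n → ℝ) → (Fin n → ℝ) :=
  fun q => fderiv ℝ Y q (X q) - fderiv ℝ X q (Y q)

/-- For a smooth trivialization `Φ` (with pointwise inverse `Ψ`) and the
vector fields `X_u(q) = Φ(q)u`, the Lie bracket of vector fields satisfies
`[X_u, X_v](q) = Φ(q)[u,v]_q` where `[u,v]_q = Φ(q)⁻¹(DΦ(q)(Φ(q)u) v − DΦ(q)(Φ(q)v) u)`;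
in particular, through the vector-field bracket the Jacobi identity holds. -/
theorem hamel_bracket_is_vector_field_bracket
    (n : ℕ)
    (Φ Ψ : (Fin n → ℝ) → ((Fin n → ℝ) →L[ℝ] (Fin n → ℝ)))
    (hΦ : ContDiff ℝ (⊤ : ℕ∞) Φ)
    (hinv : ∀ q, (Φ q).comp (Ψ q) = ContinuousLinearMap.id ℝ (Fin n → ℝ) ∧
                 (Ψ q).comp (Φ q) = ContinuousLinearMap.id ℝ (Fin n → ℝ)) :
    ∀ (u v w q : Fin n → ℝ),
      vecBracket n (fun x => Φ x u) (fun x => Φ x v) q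
        = Φ q (Ψ q ((fderiv ℝ Φ q (Φ q u)) v - (fderiv ℝ Φ q (Φ q v)) u)) ∧
      (vecBracket n (fun x => Φ x u) (vecBracket n (fun x => Φ x v) (fun x => Φ x w)) q
        + vecBracket n (fun x => Φ x v) (vecBracket n (fun x => Φ x w) (fun x => Φ x u)) q
        + vecBracket n (fun x => Φ x w) (vecBracket n (fun x => Φ x u) (fun x => Φ x v)) q
        = 0) := by
  intro u v w q
  have hdiff : ∀ x, DifferentiableAt ℝ Φ x := fun x => (hΦ.differentiable (by simp) x)
  have hX : ∀ a : Fin n → ℝ, ContDiff ℝ (⊤ : ℕ∞) (fun x => Φ x a) :=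
    fun a => hΦ.clm_apply contDiff_const
  have key : ∀ (a : Fin n → ℝ) (x y : Fin n → ℝ),
      fderiv ℝ (fun z => Φ z a) x y = (fderiv ℝ Φ x y) a := by
    intro a x y
    rw [fderiv_clm_apply (hdiff x) (differentiableAt_const _)]
    simp
  have hΦΨ : ∀ x z, Φ x (Ψ x z) = z := by
    intro x z
    have := (hinv x).1
    have := congrArg (fun (L : (Fin n → ℝ) →L[ℝ] (Fin n → ℝ)) => L z) this
    simpa using this
  constructor
  · simp only [vecBracket, hΦΨ, key]
  · -- Jacobi identity via Mathlib's Leibniz identity for lieBracket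
    have hbr : ∀ X Y : (Fin n → ℝ) → (Fin n → ℝ),
        vecBracket n X Y = VectorField.lieBracket ℝ X Y := fun _ _ => rfl
    simp only [hbr]
    set Xu := fun x => Φ x u
    set Xv := fun x => Φ x v
    set Xw := fun x => Φ x w
    have hu2 : ContDiffAt ℝ 2 Xu q := (hX u).contDiffAt.of_le (WithTop.coe_le_coe.2 le_top)
    have hv2 : ContDiffAt ℝ 2 Xv q := (hX v).contDiffAt.of_le (WithTop.coe_le_coe.2 le_top)
    have hw2 : ContDiffAt ℝ 2 Xw q := (hX w).contDiffAt.of_le (WithTop.coe_le_coe.2 le_top)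
    have leib := VectorField.leibniz_identity_lieBracket (𝕜 := ℝ) (by simp) hu2 hv2 hw2
    have hswap1 : VectorField.lieBracket ℝ (VectorField.lieBracket ℝ Xu Xv) Xw q
        = - VectorField.lieBracket ℝ Xw (VectorField.lieBracket ℝ Xu Xv) q :=
      VectorField.lieBracket_swap
    have hneg : VectorField.lieBracket ℝ Xu Xw = (-1 : ℝ) • VectorField.lieBracket ℝ Xw Xu := by
      funext x
      simp [VectorField.lieBracket_swap (V := Xu) (W := Xw) (x := x)]
    have hdiffwu : DifferentiableAt ℝ (VectorField.lieBracket ℝ Xw Xu) q := by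
      have : ContDiff ℝ 1 (VectorField.lieBracket ℝ Xw Xu) :=
        (hX w).lieBracket_vectorField (hX u) (WithTop.coe_le_coe.2 le_top)
      exact (this.differentiable (by simp) q)
    have hswap2 : VectorField.lieBracket ℝ Xv (VectorField.lieBracket ℝ Xu Xw) q
        = - VectorField.lieBracket ℝ Xv (VectorField.lieBracket ℝ Xw Xu) q := by
      rw [hneg, VectorField.lieBracket_const_smul_right hdiffwu]
      simp
    rw [leib] at *
    rw [hswap1, hswap2] at leib ⊢
    linear_combination (norm := abel) leib
end

section
/- Let U ⊆ ℝⁿ be open, Φ : U → GL(n,ℝ) a C¹ map, and q : [0,T] → U a C¹ curve. If δq : [0,T] → ℝⁿ is a C¹ variation and η(t) := Φ(q(t))⁻¹ δq(t), ξ(t) := Φ(q(t))⁻¹ q̇(t), then D(Φ(q)⁻¹)·δq·q̇ + Φ(q)⁻¹ (d/dt δq) = η̇ + [ξ, η]_q, where [u,v]_q = Φ(q)⁻¹(DΦ(q)(Φ(q)u) v − DΦ(q)(Φ(q)v) u). -/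
/-!
Since `Ψ y` is the ring inverse of `Φ y` in the Banach algebra of operators, the chain rule and
the derivative `t ↦ -x⁻¹ t x⁻¹` of inversion give `DΨ(x)(w) v = -Ψ x (DΦ(x)(w) (Ψ x v))`.
Hence the left side is `-Ψ(DΦ(δq) ξ) + Ψ(δq̇)`, while the product rule gives
`η̇ = -Ψ(DΦ(q̇) η) + Ψ(δq̇)`; their difference is the bracket `[ξ, η]_q` once `Φ(q) ξ = q̇` and
`Φ(q) η = δq` are substituted.
-/

open Filter Topology ContinuousLinearMap

section InverseDerivative

variable {𝕜 E : Type*} [NontriviallyNormedField 𝕜] [NormedAddCommGroup E] [NormedSpace 𝕜 E]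

theorem HasFDerivAt.inverse_of_eventually_mul_eq_one {R : Type*} [NormedRing R]
    [HasSummableGeomSeries R] [NormedAlgebra 𝕜 R] {Φ Ψ : E → R} {Φ' : E →L[𝕜] R} {x : E}
    (hΦ : HasFDerivAt Φ Φ' x) (hinv : ∀ᶠ y in 𝓝 x, Φ y * Ψ y = 1 ∧ Ψ y * Φ y = 1) :
    HasFDerivAt Ψ (-(mulLeftRight 𝕜 R (Ψ x) (Ψ x)).comp Φ') x := by
  have hΨ : ∀ᶠ y in 𝓝 x, Ring.inverse (Φ y) = Ψ y :=
    hinv.mono fun y hy => Ring.inverse_unit ⟨Φ y, Ψ y, hy.1, hy.2⟩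
  let u : Rˣ := ⟨Φ x, Ψ x, hinv.self_of_nhds.1, hinv.self_of_nhds.2⟩
  have h := (hasFDerivAt_ringInverse (𝕜 := 𝕜) u).comp x hΦ
  rw [neg_comp] at h
  exact h.congr_of_eventuallyEq (hΨ.mono fun y hy => hy.symm)

variable {F : Type*} [NormedAddCommGroup F] [NormedSpace 𝕜 F] [CompleteSpace F]

theorem fderiv_apply_apply_of_eventually_mul_eq_one {Φ Ψ : E → F →L[𝕜] F} {x : E}
    (hΦ : DifferentiableAt 𝕜 Φ x) (hinv : ∀ᶠ y in 𝓝 x, Φ y * Ψ y = 1 ∧ Ψ y * Φ y = 1)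
    (w : E) (v : F) : fderiv 𝕜 Ψ x w v = -Ψ x (fderiv 𝕜 Φ x w (Ψ x v)) := by
  rw [(hΦ.hasFDerivAt.inverse_of_eventually_mul_eq_one hinv).fderiv]
  simp [mulLeftRight_apply]

end InverseDerivative

theorem trivialized_variation_identity_general
    (n : ℕ)
    (Φ Ψ : (Fin n → ℝ) → ((Fin n → ℝ) →L[ℝ] (Fin n → ℝ)))
    (hΦ : ContDiff ℝ 1 Φ)
    (hinv : ∀ x, (Φ x).comp (Ψ x) = ContinuousLinearMap.id ℝ (Fin n → ℝ) ∧
                 (Ψ x).comp (Φ x) = ContinuousLinearMap.id ℝ (Fin n → ℝ))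
    (q δq : ℝ → (Fin n → ℝ)) (hq : ContDiff ℝ 1 q) (hδq : ContDiff ℝ 1 δq) :
    let br : (Fin n → ℝ) → (Fin n → ℝ) → (Fin n → ℝ) → (Fin n → ℝ) :=
      fun x u v => Ψ x ((fderiv ℝ Φ x (Φ x u)) v - (fderiv ℝ Φ x (Φ x v)) u)
    let η : ℝ → (Fin n → ℝ) := fun t => Ψ (q t) (δq t)
    let ξ : ℝ → (Fin n → ℝ) := fun t => Ψ (q t) (deriv q t)
    ∀ t : ℝ,
      (fderiv ℝ Ψ (q t) (δq t)) (deriv q t) + Ψ (q t) (deriv δq t)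
        = deriv η t + br (q t) (ξ t) (η t) := by
  intro br η ξ t
  -- operator `*` and `1` are `comp` and `id` by definition
  have hmul : ∀ᶠ x in 𝓝 (q t), Φ x * Ψ x = 1 ∧ Ψ x * Φ x = 1 := Eventually.of_forall hinv
  have hΦq : DifferentiableAt ℝ Φ (q t) := hΦ.differentiable one_ne_zero _
  have hΦΨ : ∀ x v, Φ x (Ψ x v) = v := fun x => DFunLike.congr_fun (hinv x).1
  have hΨq := (hΦq.hasFDerivAt.inverse_of_eventually_mul_eq_one hmul).differentiableAt
  have hDΨ := fderiv_apply_apply_of_eventually_mul_eq_one hΦq hmul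
  have hη : HasDerivAt η (fderiv ℝ Ψ (q t) (deriv q t) (δq t) + Ψ (q t) (deriv δq t)) t :=
    (hΨq.hasFDerivAt.comp_hasDerivAt t (hq.differentiable one_ne_zero t).hasDerivAt).clm_apply
      (hδq.differentiable one_ne_zero t).hasDerivAt
  rw [hη.deriv]
  simp only [br, ξ, η, hΦΨ, hDΨ, map_sub]
  abel

/-- Along a C¹ curve `q` with C¹ variation `δq`, setting
`η(t) = Φ(q(t))⁻¹ δq(t)` and `ξ(t) = Φ(q(t))⁻¹ q̇(t)`, one has
`D(Φ(q)⁻¹)·δq·q̇ + Φ(q)⁻¹ (d/dt δq) = η̇ + [ξ, η]_q`, where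
`[u,v]_q = Φ(q)⁻¹(DΦ(q)(Φ(q)u) v − DΦ(q)(Φ(q)v) u)`. -/
theorem trivialized_variation_identity
    (n : ℕ)
    (Φ Ψ : (Fin n → ℝ) → ((Fin n → ℝ) →L[ℝ] (Fin n → ℝ)))
    (hΦ : ContDiff ℝ 1 Φ) (hΨ : ContDiff ℝ 1 Ψ)
    (hinv : ∀ x, (Φ x).comp (Ψ x) = ContinuousLinearMap.id ℝ (Fin n → ℝ) ∧
                 (Ψ x).comp (Φ x) = ContinuousLinearMap.id ℝ (Fin n → ℝ))
    (q δq : ℝ → (Fin n → ℝ)) (hq : ContDiff ℝ 1 q) (hδq : ContDiff ℝ 1 δq) :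
    let br : (Fin n → ℝ) → (Fin n → ℝ) → (Fin n → ℝ) → (Fin n → ℝ) :=
      fun x u v => Ψ x ((fderiv ℝ Φ x (Φ x u)) v - (fderiv ℝ Φ x (Φ x v)) u)
    let η : ℝ → (Fin n → ℝ) := fun t => Ψ (q t) (δq t)
    let ξ : ℝ → (Fin n → ℝ) := fun t => Ψ (q t) (deriv q t)
    ∀ t : ℝ,
      (fderiv ℝ Ψ (q t) (δq t)) (deriv q t) + Ψ (q t) (deriv δq t)
        = deriv η t + br (q t) (ξ t) (η t) :=
  trivialized_variation_identity_general n Φ Ψ hΦ hinv q δq hq hδq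
end

section
/- Let f : [0,T] × ℝⁿ → ℝⁿ be C¹ with f and D_q f continuous and globally Lipschitz in q, let g : [0,T] × ℝⁿ → ℝ be C¹, and let p₁ : ℝⁿ → ℝⁿ be continuous. Then the free boundary problem q̇ = f(t,q), ṗ = −[D_q f(t,q)]ᵀ p − ∇_q g(t,q), q(0) = q₀, p(T) = p₁(q(T)) has a unique C¹ solution (q,p) : [0,T] → ℝⁿ × ℝⁿ. -/
open Set

/-- `(q,p)` solves the free boundary Type II problem for the maximally degenerate
Hamiltonian `H(t,q,p) = ⟨p, f(t,q)⟩ + g(t,q)`: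
`q̇ = f(t,q)`, `ṗ = -[D_q f(t,q)]ᵀ p - ∇_q g(t,q)`, `q(0) = q₀`, `p(T) = p₁(q(T))`. -/
def IsFreeBoundarySolution (n : ℕ) (T : ℝ) (f : ℝ → (Fin n → ℝ) → (Fin n → ℝ))
    (g : ℝ → (Fin n → ℝ) → ℝ) (q₀ : Fin n → ℝ) (p₁ : (Fin n → ℝ) → (Fin n → ℝ))
    (q p : ℝ → (Fin n → ℝ)) : Prop :=
  q 0 = q₀ ∧ p T = p₁ (q T) ∧
  ∀ t ∈ Icc (0 : ℝ) T,
    HasDerivAt q (f t (q t)) t ∧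
    HasDerivAt p
      (fun i => -(∑ j, p t j * fderiv ℝ (fun x => f t x j) (q t) (Pi.single i 1))
        - fderiv ℝ (g t) (q t) (Pi.single i 1)) t

/-! The `q`-equation does not involve `p`, and its right-hand side is globally Lipschitz, so
Picard–Lindelöf on successive intervals of length `1 / (2 (K + 1))` solves it on the whole
time interval. Once `q` is known, the `p`-equation is linear in `p`, with coefficients bounded by
`K` because `‖D_q f‖ ≤ K`; it is therefore again globally Lipschitz and is solved backward from
`p(T) = p₁(q(T))`. Uniqueness follows from Grönwall, first for `q`, then for `p`. -/

open scoped NNReal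

section ODE

variable {E : Type*} [NormedAddCommGroup E] [NormedSpace ℝ E]

def IsODESolutionOn (v : ℝ → E → E) (α : ℝ → E) (s : Set ℝ) : Prop :=
  ∀ t ∈ s, HasDerivWithinAt α (v t (α t)) s t

namespace IsODESolutionOn

variable {v : ℝ → E → E} {α β : ℝ → E} {s s' : Set ℝ}

lemma congr (h : IsODESolutionOn v α s) (hβ : EqOn β α s) : IsODESolutionOn v β s :=
  fun t ht => by rw [hβ ht]; exact (h t ht).congr_of_mem hβ ht

lemma union (h : IsODESolutionOn v α s) (h' : IsODESolutionOn v α s') (hs : IsClosed s)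
    (hs' : IsClosed s') : IsODESolutionOn v α (s ∪ s') := by
  have within {u : Set ℝ} (hu : IsClosed u) (hα : IsODESolutionOn v α u) (t : ℝ) :
      HasDerivWithinAt α (v t (α t)) u t := by
    by_cases ht : t ∈ u
    · exact hα t ht
    · exact HasFDerivWithinAt.of_notMem_closure (hu.closure_eq.symm ▸ ht)
  exact fun t _ => (within hs h t).union (within hs' h' t)

lemma piecewise_Icc {a c d : ℝ} (hac : a ≤ c) (hcd : c ≤ d) (hα : IsODESolutionOn v α (Icc a c))
    (hβ : IsODESolutionOn v β (Icc c d)) (hc : α c = β c) :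
    IsODESolutionOn v (fun t => if t ≤ c then α t else β t) (Icc a d) := by
  rw [← Icc_union_Icc_eq_Icc hac hcd]
  refine (hα.congr fun t ht => if_pos ht.2).union (hβ.congr fun t ht => ?_) isClosed_Icc
    isClosed_Icc
  rcases ht.1.eq_or_lt with rfl | hlt
  · exact (if_pos le_rfl).trans hc
  · exact if_neg hlt.not_ge

lemma comp_neg {c d : ℝ} (h : IsODESolutionOn (fun t x => -v (-t) x) β (Icc (-d) (-c))) :
    IsODESolutionOn v (fun t => β (-t)) (Icc c d) := by
  have hmaps : MapsTo Neg.neg (Icc c d) (Icc (-d) (-c)) :=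
    fun t ht => ⟨neg_le_neg ht.2, neg_le_neg ht.1⟩
  intro t ht
  simpa [Function.comp_def] using
    (h (-t) (hmaps ht)).scomp t (hasDerivAt_neg t).hasDerivWithinAt hmaps

lemma continuousOn (h : IsODESolutionOn v α s) : ContinuousOn α s :=
  fun t ht => (h t ht).continuousWithinAt

lemma hasDerivAt {a b t : ℝ} (h : IsODESolutionOn v α (Icc a b)) (ht : t ∈ Ioo a b) :
    HasDerivAt α (v t (α t)) t :=
  (h t (Ioo_subset_Icc_self ht)).hasDerivAt (Icc_mem_nhds ht.1 ht.2)

lemma contDiffOn_Ioo {a b : ℝ} (hv : Continuous (Function.uncurry v))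
    (h : IsODESolutionOn v α (Icc a b)) : ContDiffOn ℝ 1 α (Ioo a b) := by
  rw [← zero_add 1, contDiffOn_succ_iff_deriv_of_isOpen isOpen_Ioo]
  refine ⟨fun t ht => (h.hasDerivAt ht).differentiableAt.differentiableWithinAt, by simp, ?_⟩
  have hcont : ContinuousOn (fun t => v t (α t)) (Ioo a b) :=
    hv.comp_continuousOn (continuousOn_id.prodMk (h.continuousOn.mono Ioo_subset_Icc_self))
  exact contDiffOn_zero.2 (hcont.congr fun t ht => (h.hasDerivAt ht).deriv)

end IsODESolutionOn

variable [CompleteSpace E] {v : ℝ → E → E} {K : ℝ≥0}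

lemma exists_isODESolutionOn_Icc_of_mul_le (hv : Continuous (Function.uncurry v))
    (hl : ∀ t, LipschitzWith K (v t)) {c d : ℝ} (hcd : c ≤ d) (hK : K * (d - c) ≤ 1 / 2)
    (x₀ : E) : ∃ α : ℝ → E, α c = x₀ ∧ IsODESolutionOn v α (Icc c d) := by
  have hv₀ : Continuous fun t => v t x₀ := hv.comp (continuous_id.prodMk continuous_const)
  obtain ⟨M, hM⟩ := isCompact_Icc.exists_bound_of_continuousOn hv₀.continuousOn
  have hM₀ : 0 ≤ M := (norm_nonneg _).trans (hM c ⟨le_rfl, hcd⟩)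
  have hdc : 0 ≤ d - c := sub_nonneg.2 hcd
  -- On the ball of radius `R = 2 M (d - c)` the field is bounded by `M + K R ≤ R / (d - c)`.
  set R : ℝ≥0 := ⟨2 * M * (d - c), by positivity⟩
  set L : ℝ≥0 := ⟨M + K * R, by positivity⟩
  have hpl : IsPicardLindelof v (⟨c, left_mem_Icc.2 hcd⟩ : Icc c d) x₀ R 0 L K :=
    { lipschitzOnWith := fun t _ => (hl t).lipschitzOnWith
      continuousOn := fun x _ =>
        (hv.comp (continuous_id.prodMk (continuous_const (y := x)))).continuousOn
      norm_le := fun t ht x hx =>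
        calc ‖v t x‖ ≤ ‖v t x₀‖ + ‖v t x - v t x₀‖ := norm_le_insert' _ _
          _ ≤ M + K * R := add_le_add (hM t ht)
            (((hl t).norm_sub_le x x₀).trans
              (mul_le_mul_of_nonneg_left (mem_closedBall_iff_norm.1 hx) K.2))
      mul_max_le := by
        change (M + K * (2 * M * (d - c))) * max (d - c) (c - c) ≤ 2 * M * (d - c) - 0
        rw [max_eq_left (by linarith)]
        nlinarith [mul_le_mul_of_nonneg_left hK (mul_nonneg hM₀ hdc)] }
  exact hpl.exists_eq_forall_mem_Icc_hasDerivWithinAt₀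

lemma exists_isODESolutionOn_Icc_of_le (hv : Continuous (Function.uncurry v))
    (hl : ∀ t, LipschitzWith K (v t)) {c d : ℝ} (hcd : c ≤ d) (x₀ : E) :
    ∃ α : ℝ → E, α c = x₀ ∧ IsODESolutionOn v α (Icc c d) := by
  set h : ℝ := 1 / (2 * (K + 1))
  have hh : 0 < h := by positivity
  have hKh : K * h ≤ 1 / 2 := by
    rw [mul_one_div, div_le_div_iff₀ (by positivity) two_pos]
    linarith
  have step (k : ℕ) : ∀ d, c ≤ d → d ≤ c + (k + 1) * h →
      ∃ α : ℝ → E, α c = x₀ ∧ IsODESolutionOn v α (Icc c d) := by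
    induction k with
    | zero =>
      intro d hcd hd
      refine exists_isODESolutionOn_Icc_of_mul_le hv hl hcd (le_trans ?_ hKh) x₀
      exact mul_le_mul_of_nonneg_left (by push_cast at hd; linarith) K.2
    | succ k ih =>
      intro d hcd hd
      set c' := max c (d - h)
      have hcc' : c ≤ c' := le_max_left _ _
      have hc'd : c' ≤ d := max_le hcd (by linarith)
      obtain ⟨α, hα₀, hα⟩ := ih c' hcc' (max_le (by nlinarith) (by push_cast at hd; linarith))
      obtain ⟨β, hβ₀, hβ⟩ := exists_isODESolutionOn_Icc_of_mul_le hv hl hc'd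
        (le_trans (mul_le_mul_of_nonneg_left (by linarith [le_max_right c (d - h)]) K.2) hKh)
        (α c')
      exact ⟨_, by simp [hcc', hα₀], hα.piecewise_Icc hcc' hc'd hβ hβ₀.symm⟩
  obtain ⟨k, hk⟩ := exists_nat_ge ((d - c) / h)
  exact step k d hcd (by rw [div_le_iff₀ hh] at hk; nlinarith)

lemma exists_isODESolutionOn_Icc (hv : Continuous (Function.uncurry v))
    (hl : ∀ t, LipschitzWith K (v t)) {a b t₀ : ℝ} (ht₀ : t₀ ∈ Icc a b) (x₀ : E) :
    ∃ α : ℝ → E, α t₀ = x₀ ∧ IsODESolutionOn v α (Icc a b) := by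
  obtain ⟨α, hα₀, hα⟩ := exists_isODESolutionOn_Icc_of_le hv hl ht₀.2 x₀
  have hv' : Continuous (Function.uncurry fun t x => -v (-t) x) :=
    (hv.comp ((continuous_fst.neg).prodMk continuous_snd)).neg
  obtain ⟨β, hβ₀, hβ⟩ :=
    exists_isODESolutionOn_Icc_of_le hv' (fun t => (hl (-t)).neg) (neg_le_neg ht₀.1) x₀
  refine ⟨_, ?_, (IsODESolutionOn.comp_neg hβ).piecewise_Icc ht₀.1 ht₀.2 hα (by simp [hβ₀, hα₀])⟩
  simp [hβ₀]

theorem exists_continuous_forall_hasDerivAt_contDiffOn (hv : Continuous (Function.uncurry v))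
    (hl : ∀ t, LipschitzWith K (v t)) (a b t₀ : ℝ) (x₀ : E) :
    ∃ α : ℝ → E, Continuous α ∧ α t₀ = x₀ ∧ (∀ t ∈ Icc a b, HasDerivAt α (v t (α t)) t) ∧
      ContDiffOn ℝ 1 α (Icc a b) := by
  set c := min a t₀ - 1
  set d := max b t₀ + 1
  have ht₀ : t₀ ∈ Icc c d := ⟨by linarith [min_le_right a t₀], by linarith [le_max_right b t₀]⟩
  have hsub : Icc a b ⊆ Ioo c d := fun t ht =>
    ⟨by linarith [min_le_left a t₀, ht.1], by linarith [le_max_left b t₀, ht.2]⟩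
  have hcd : c ≤ d := ht₀.1.trans ht₀.2
  obtain ⟨β, hβ₀, hβ⟩ := exists_isODESolutionOn_Icc hv hl ht₀ x₀
  -- Freezing `β` outside `[c, d]` makes it continuous on all of `ℝ`.
  set α := IccExtend hcd ((Icc c d).domRestrict β)
  have hαβ : EqOn α β (Icc c d) := fun t ht => IccExtend_of_mem hcd _ ht
  have hα := hβ.congr hαβ
  exact ⟨α, continuous_IccExtend_iff.2 (continuousOn_iff_continuous_domRestrict.1 hβ.continuousOn),
    (hαβ ht₀).trans hβ₀, fun t ht => hα.hasDerivAt (hsub ht), (hα.contDiffOn_Ioo hv).mono hsub⟩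

end ODE

section Adjoint

variable {n : ℕ} {f : ℝ → (Fin n → ℝ) → (Fin n → ℝ)} {g : ℝ → (Fin n → ℝ) → ℝ}

noncomputable def adjointField (f : ℝ → (Fin n → ℝ) → (Fin n → ℝ)) (g : ℝ → (Fin n → ℝ) → ℝ)
    (q : ℝ → Fin n → ℝ) (t : ℝ) (p : Fin n → ℝ) : Fin n → ℝ :=
  fun i => -(∑ j, p j * fderiv ℝ (fun x => f t x j) (q t) (Pi.single i 1))
    - fderiv ℝ (g t) (q t) (Pi.single i 1)

lemma lipschitzWith_adjointField {K : ℝ≥0} (hlip : ∀ t, LipschitzWith K (f t))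
    (q : ℝ → Fin n → ℝ) (t : ℝ) : LipschitzWith (n * K) (adjointField f g q t) := by
  refine lipschitzWith_iff_dist_le_mul.2 fun x y => (dist_pi_le_iff (by positivity)).2 fun i => ?_
  set c : Fin n → ℝ := fun j => fderiv ℝ (fun x => f t x j) (q t) (Pi.single i 1)
  have hc (j : Fin n) : |c j| ≤ K := by
    have hj : LipschitzWith K fun x => f t x j := by
      simpa [Function.comp_def] using (LipschitzWith.eval j).comp (hlip t)
    calc |c j| ≤ ‖fderiv ℝ (fun x => f t x j) (q t)‖ * ‖(Pi.single i 1 : Fin n → ℝ)‖ :=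
          (Real.norm_eq_abs _).symm.trans_le (ContinuousLinearMap.le_opNorm _ _)
      _ ≤ K * 1 := by
          gcongr
          · exact norm_fderiv_le_of_lipschitz ℝ hj
          · exact (Pi.norm_single _).trans_le (by simp)
      _ = K := mul_one _
  calc dist (adjointField f g q t x i) (adjointField f g q t y i)
      = |∑ j, (y j - x j) * c j| := by
        rw [Real.dist_eq, adjointField, adjointField]
        congr 1
        simp only [c, sub_mul, Finset.sum_sub_distrib]
        ring
    _ ≤ ∑ j, |y j - x j| * |c j| :=
        (Finset.abs_sum_le_sum_abs _ _).trans_eq (by simp only [abs_mul])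
    _ ≤ ∑ _j : Fin n, dist x y * K := by
        gcongr with j
        · rw [abs_sub_comm, ← Real.dist_eq]
          exact dist_le_pi_dist x y j
        · exact hc j
    _ = (n * K : ℝ≥0) * dist x y := by
        simp only [Finset.sum_const, Finset.card_univ, Fintype.card_fin, nsmul_eq_mul,
          NNReal.coe_mul, NNReal.coe_natCast]
        ring

lemma continuous_adjointField (hf : ∀ t, Differentiable ℝ (f t))
    (hdfc : Continuous fun x : ℝ × (Fin n → ℝ) => fderiv ℝ (f x.1) x.2)
    (hdgc : Continuous fun x : ℝ × (Fin n → ℝ) => fderiv ℝ (g x.1) x.2)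
    {q : ℝ → Fin n → ℝ} (hq : Continuous q) :
    Continuous (Function.uncurry (adjointField f g q)) := by
  have hq' : Continuous fun x : ℝ × (Fin n → ℝ) => (x.1, q x.1) := by fun_prop
  have hdf : Continuous fun x : ℝ × (Fin n → ℝ) => fderiv ℝ (f x.1) (q x.1) := hdfc.comp hq'
  have hdg : Continuous fun x : ℝ × (Fin n → ℝ) => fderiv ℝ (g x.1) (q x.1) := hdgc.comp hq'
  refine continuous_pi fun i => ?_
  simp only [Function.uncurry, adjointField, fderiv_apply (hf _ _), ContinuousLinearMap.comp_apply,
    ContinuousLinearMap.proj_apply]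
  fun_prop

end Adjoint

theorem exists_isFreeBoundarySolution {n : ℕ} {T : ℝ} {f : ℝ → (Fin n → ℝ) → (Fin n → ℝ)}
    {g : ℝ → (Fin n → ℝ) → ℝ} (hfc : Continuous fun x : ℝ × (Fin n → ℝ) => f x.1 x.2)
    {K : ℝ≥0} (hlip : ∀ t, LipschitzWith K (f t)) (hf : ∀ t, Differentiable ℝ (f t))
    (hdfc : Continuous fun x : ℝ × (Fin n → ℝ) => fderiv ℝ (f x.1) x.2)
    (hdgc : Continuous fun x : ℝ × (Fin n → ℝ) => fderiv ℝ (g x.1) x.2)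
    (q₀ : Fin n → ℝ) (p₁ : (Fin n → ℝ) → (Fin n → ℝ)) :
    ∃ q p : ℝ → (Fin n → ℝ), ContDiffOn ℝ 1 q (Icc 0 T) ∧ ContDiffOn ℝ 1 p (Icc 0 T) ∧
      IsFreeBoundarySolution n T f g q₀ p₁ q p := by
  obtain ⟨q, hqc, hq₀, hq, hq₁⟩ := exists_continuous_forall_hasDerivAt_contDiffOn hfc hlip 0 T 0 q₀
  obtain ⟨p, -, hpT, hp, hp₁⟩ := exists_continuous_forall_hasDerivAt_contDiffOn
    (continuous_adjointField hf hdfc hdgc hqc) (lipschitzWith_adjointField hlip q) 0 T T (p₁ (q T))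
  exact ⟨q, p, hq₁, hp₁, hq₀, hpT, fun t ht => ⟨hq t ht, hp t ht⟩⟩

theorem IsFreeBoundarySolution.eqOn {n : ℕ} {T : ℝ} {f : ℝ → (Fin n → ℝ) → (Fin n → ℝ)}
    {g : ℝ → (Fin n → ℝ) → ℝ} {K : ℝ≥0} (hlip : ∀ t, LipschitzWith K (f t))
    {q₀ : Fin n → ℝ} {p₁ : (Fin n → ℝ) → (Fin n → ℝ)} {q p q' p' : ℝ → (Fin n → ℝ)}
    (h : IsFreeBoundarySolution n T f g q₀ p₁ q p)
    (h' : IsFreeBoundarySolution n T f g q₀ p₁ q' p') :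
    EqOn q q' (Icc 0 T) ∧ EqOn p p' (Icc 0 T) := by
  obtain ⟨hq₀, hpT, hsol⟩ := h
  obtain ⟨hq₀', hpT', hsol'⟩ := h'
  have hcont {u u' : ℝ → Fin n → ℝ}
      (hu : ∀ t ∈ Icc 0 T, HasDerivAt u (u' t) t) : ContinuousOn u (Icc 0 T) :=
    continuousOn_of_forall_continuousAt fun t ht => (hu t ht).continuousAt
  have hqq' : EqOn q q' (Icc 0 T) :=
    ODE_solution_unique hlip (hcont fun t ht => (hsol t ht).1)
      (fun t ht => (hsol t (Ico_subset_Icc_self ht)).1.hasDerivWithinAt)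
      (hcont fun t ht => (hsol' t ht).1)
      (fun t ht => (hsol' t (Ico_subset_Icc_self ht)).1.hasDerivWithinAt) (hq₀.trans hq₀'.symm)
  refine ⟨hqq', fun t ht => ?_⟩
  have hT : T ∈ Icc 0 T := ⟨ht.1.trans ht.2, le_rfl⟩
  refine ODE_solution_unique_of_mem_Icc_left (v := adjointField f g q) (s := fun _ => univ)
    (fun t _ => (lipschitzWith_adjointField hlip q t).lipschitzOnWith)
    (hcont fun t ht => (hsol t ht).2)
    (fun t ht => (hsol t (Ioc_subset_Icc_self ht)).2.hasDerivWithinAt) (fun _ _ => trivial)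
    (hcont fun t ht => (hsol' t ht).2) (fun t ht => ?_) (fun _ _ => trivial)
    (by rw [hpT, hpT', hqq' hT]) ht
  have hqt : adjointField f g q t = adjointField f g q' t := by
    ext x i
    simp only [adjointField, hqq' (Ioc_subset_Icc_self ht)]
  rw [hqt]
  exact (hsol' t (Ioc_subset_Icc_self ht)).2.hasDerivWithinAt

theorem free_boundary_typeII_existence_uniqueness_general
    (n : ℕ) (T : ℝ) (q₀ : Fin n → ℝ)
    (f : ℝ → (Fin n → ℝ) → (Fin n → ℝ)) (g : ℝ → (Fin n → ℝ) → ℝ)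
    (p₁ : (Fin n → ℝ) → (Fin n → ℝ))
    (hfc : Continuous fun x : ℝ × (Fin n → ℝ) => f x.1 x.2)
    (K : NNReal) (hlip : ∀ t, LipschitzWith K (f t))
    (hf1 : ∀ t, ContDiff ℝ 1 (f t))
    (hdfc : Continuous fun x : ℝ × (Fin n → ℝ) => fderiv ℝ (f x.1) x.2)
    (hdgc : Continuous fun x : ℝ × (Fin n → ℝ) => fderiv ℝ (g x.1) x.2) :
    (∃ q p : ℝ → (Fin n → ℝ),
        ContDiffOn ℝ 1 q (Icc 0 T) ∧ ContDiffOn ℝ 1 p (Icc 0 T) ∧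
        IsFreeBoundarySolution n T f g q₀ p₁ q p) ∧
    (∀ q p q' p' : ℝ → (Fin n → ℝ),
        IsFreeBoundarySolution n T f g q₀ p₁ q p →
        IsFreeBoundarySolution n T f g q₀ p₁ q' p' →
        EqOn q q' (Icc 0 T) ∧ EqOn p p' (Icc 0 T)) :=
  ⟨exists_isFreeBoundarySolution hfc hlip (fun t => (hf1 t).differentiable one_ne_zero) hdfc hdgc
      q₀ p₁,
    fun _ _ _ _ h h' => h.eqOn hlip h'⟩

/-- With `f` C¹, `f` and `D_q f` continuous and globally Lipschitz in
the state, `g` C¹, and `p₁` continuous, the free boundary Type II problem has a unique C¹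
solution on `[0,T]`. -/
theorem free_boundary_typeII_existence_uniqueness
    (n : ℕ) (T : ℝ) (hT : 0 < T) (q₀ : Fin n → ℝ)
    (f : ℝ → (Fin n → ℝ) → (Fin n → ℝ)) (g : ℝ → (Fin n → ℝ) → ℝ)
    (p₁ : (Fin n → ℝ) → (Fin n → ℝ)) (hp1 : Continuous p₁)
    (hfc : Continuous fun x : ℝ × (Fin n → ℝ) => f x.1 x.2)
    (K : NNReal) (hlip : ∀ t, LipschitzWith K (f t))
    (hf1 : ∀ t, ContDiff ℝ 1 (f t))
    (hg1 : ∀ t, Differentiable ℝ (g t))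
    (hdfc : Continuous fun x : ℝ × (Fin n → ℝ) => fderiv ℝ (f x.1) x.2)
    (hdgc : Continuous fun x : ℝ × (Fin n → ℝ) => fderiv ℝ (g x.1) x.2) :
    (∃ q p : ℝ → (Fin n → ℝ),
        ContDiffOn ℝ 1 q (Icc 0 T) ∧ ContDiffOn ℝ 1 p (Icc 0 T) ∧
        IsFreeBoundarySolution n T f g q₀ p₁ q p) ∧
    (∀ q p q' p' : ℝ → (Fin n → ℝ),
        IsFreeBoundarySolution n T f g q₀ p₁ q p →
        IsFreeBoundarySolution n T f g q₀ p₁ q' p' →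
        EqOn q q' (Icc 0 T) ∧ EqOn p p' (Icc 0 T)) :=
  free_boundary_typeII_existence_uniqueness_general n T q₀ f g p₁ hfc K hlip hf1 hdfc hdgc
end
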